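/- Let (C,χ) be a Hopf heap with Grunspan map ϑ. Then for all a,b,c,d ∈ C: Σ τ_{a₂}^{[ϑ(a₁),b,c]} = ε(a)τ_b^c, Σ τ_{a₂}^{ϑ(a₁)} = ε(a)·id, and τ_c^d ∘ τ_a^{ϑ(b)} = τ_{[c,b,a]}^d, where τ_a^b(c) = [c,a,b]. -/

import Mathlib

open Coalgebra TensorProduct

universe u v w

/-- The older Mathlib `Coalgebra.Repr` (index type bundled as a field), at index universe `v`. -/
structure CoalgebraRepr (R : Type u) {A : Type v}
    [CommSemiring R] [AddCommMonoid A] [Module R A] [CoalgebraStruct R A] (a : A) where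
  {ι : Type v}
  index : Finset ι
  left : ι → A
  right : ι → A
  eq : ∑ i ∈ index, left i ⊗ₜ[R] right i = CoalgebraStruct.comul a

/-- A Hopf heap: a coalgebra `C` together with a coalgebra map
`χ : C ⊗ C^co ⊗ C → C` (given here as a trilinear map) satisfying the heap axioms. -/
structure HopfHeap (F : Type u) (C : Type v) [Field F] [AddCommGroup C] [Module F C]
    [Coalgebra F C] where
  χ : C →ₗ[F] C →ₗ[F] C →ₗ[F] C
  counit_χ : ∀ a b c : C,
    counit (R := F) (χ a b c) = counit (R := F) a * counit (R := F) b * counit (R := F) c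
  comul_χ : ∀ (a b c : C) (ra : CoalgebraRepr F a) (rb : CoalgebraRepr F b)
      (rc : CoalgebraRepr F c),
    comul (R := F) (χ a b c) =
      ∑ i ∈ ra.index, ∑ j ∈ rb.index, ∑ k ∈ rc.index,
        χ (ra.left i) (rb.right j) (rc.left k) ⊗ₜ[F] χ (ra.right i) (rb.left j) (rc.right k)
  assoc : ∀ a b c d e : C, χ (χ a b c) d e = χ a b (χ c d e)
  heap_left : ∀ (c a : C) (rc : CoalgebraRepr F c),
    ∑ i ∈ rc.index, χ (rc.left i) (rc.right i) a = counit (R := F) c • a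
  heap_right : ∀ (c a : C) (rc : CoalgebraRepr F c),
    ∑ i ∈ rc.index, χ a (rc.left i) (rc.right i) = counit (R := F) c • a

variable {F : Type u} {C : Type v} [Field F] [AddCommGroup C] [Module F C] [Coalgebra F C]

/-- `θ` is a Grunspan map for the Hopf heap `hh`: a coalgebra endomorphism satisfying
`[[a,b,θ c],d,e] = [a,[d,c,b],e]`. -/
def HopfHeap.IsGrunspan (hh : HopfHeap F C) (θ : C →ₗ[F] C) : Prop :=
  (∀ c : C, counit (R := F) (θ c) = counit (R := F) c) ∧
  (∀ (c : C) (rc : CoalgebraRepr F c),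
    comul (R := F) (θ c) = ∑ i ∈ rc.index, θ (rc.left i) ⊗ₜ[F] θ (rc.right i)) ∧
  (∀ a b c d e : C, hh.χ (hh.χ a b (θ c)) d e = hh.χ a (hh.χ d c b) e)

/-- The right `(a,b)`-translation `τ_a^b : c ↦ [c,a,b]`. -/
def HopfHeap.tau (hh : HopfHeap F C) (a b : C) : C →ₗ[F] C where
  toFun c := hh.χ c a b
  map_add' x y := by simp
  map_smul' r x := by simp

/-! A Grunspan map turns `[x, a₂, ϑ a₁]` into the middle slot `[b, a₁, a₂]` of an outer bracket,
where the heap axiom collapses it to `ε a • b`; this gives the first identity. The second,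
`Σ [x, a₂, ϑ a₁] = ε a • x`, follows after testing against `[-, z₁, z₂] = ε z • -` for every `z`,
which separates points because a nonzero coalgebra has a nonzero counit. -/

noncomputable def CoalgebraRepr.arbitrary (R : Type u) {A : Type v} [CommSemiring R]
    [AddCommMonoid A] [Module R A] [CoalgebraStruct R A] (a : A) : CoalgebraRepr R a :=
  let r := Coalgebra.Repr.arbitrary R a
  ⟨r.index, r.left, r.right, r.eq⟩

lemma Coalgebra.exists_counit_ne_zero {R A : Type*} [CommSemiring R] [AddCommMonoid A]
    [Module R A] [Coalgebra R A] {x : A} (hx : x ≠ 0) : ∃ z : A, counit (R := R) z ≠ 0 := by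
  by_contra! h
  apply hx
  simpa [h] using (Coalgebra.sum_counit_smul (R := R) (Coalgebra.Repr.arbitrary R x)).symm

lemma Coalgebra.eq_of_forall_counit_smul_eq {K A : Type*} [Field K] [AddCommGroup A]
    [Module K A] [Coalgebra K A] {x y : A}
    (h : ∀ z : A, counit (R := K) z • x = counit (R := K) z • y) : x = y := by
  by_contra hxy
  obtain ⟨z, hz⟩ := Coalgebra.exists_counit_ne_zero (R := K) (sub_ne_zero.2 hxy)
  exact hxy (smul_right_injective A hz (h z))

namespace HopfHeap

variable (hh : HopfHeap F C)

@[simp] lemma tau_apply (a b x : C) : hh.tau a b x = hh.χ x a b := rfl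

lemma IsGrunspan.chi_chi_eq {hh : HopfHeap F C} {θ : C →ₗ[F] C} (hθ : hh.IsGrunspan θ)
    (a b c d e : C) : hh.χ (hh.χ a b (θ c)) d e = hh.χ a (hh.χ d c b) e :=
  hθ.2.2 a b c d e

variable {θ : C →ₗ[F] C}

lemma sum_chi_chi_grunspan (hθ : hh.IsGrunspan θ) (a : C) (ra : CoalgebraRepr F a) (x b c : C) :
    ∑ i ∈ ra.index, hh.χ (hh.χ x (ra.right i) (θ (ra.left i))) b c
      = counit (R := F) a • hh.χ x b c := by
  calc ∑ i ∈ ra.index, hh.χ (hh.χ x (ra.right i) (θ (ra.left i))) b c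
      = ∑ i ∈ ra.index, hh.χ x (hh.χ b (ra.left i) (ra.right i)) c := by
        simp only [hθ.chi_chi_eq]
    _ = hh.χ x (∑ i ∈ ra.index, hh.χ b (ra.left i) (ra.right i)) c := by
        rw [map_sum, LinearMap.sum_apply]
    _ = counit (R := F) a • hh.χ x b c := by
        rw [hh.heap_right a b ra, map_smul, LinearMap.smul_apply]

lemma sum_chi_grunspan (hθ : hh.IsGrunspan θ) (a : C) (ra : CoalgebraRepr F a) (x : C) :
    ∑ i ∈ ra.index, hh.χ x (ra.right i) (θ (ra.left i)) = counit (R := F) a • x := by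
  refine Coalgebra.eq_of_forall_counit_smul_eq (K := F) fun z ↦ ?_
  let rz := CoalgebraRepr.arbitrary F z
  calc counit (R := F) z • ∑ i ∈ ra.index, hh.χ x (ra.right i) (θ (ra.left i))
      = ∑ j ∈ rz.index, ∑ i ∈ ra.index,
          hh.χ (hh.χ x (ra.right i) (θ (ra.left i))) (rz.left j) (rz.right j) := by
        rw [Finset.smul_sum, Finset.sum_comm]
        exact Finset.sum_congr rfl fun i _ ↦ (hh.heap_right z _ rz).symm
    _ = counit (R := F) a • ∑ j ∈ rz.index, hh.χ x (rz.left j) (rz.right j) := by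
        simp only [hh.sum_chi_chi_grunspan hθ a ra, Finset.smul_sum]
    _ = counit (R := F) z • counit (R := F) a • x := by
        rw [hh.heap_right z x rz, smul_comm]

end HopfHeap

/-- Translation identities involving the Grunspan map:
`Σ τ_{a₂}^{[ϑ(a₁),b,c]} = ε(a)τ_b^c`, `Σ τ_{a₂}^{ϑ(a₁)} = ε(a)·id` and
`τ_c^d ∘ τ_a^{ϑ(b)} = τ_{[c,b,a]}^d`. -/
theorem tau_grunspan (hh : HopfHeap F C) (θ : C →ₗ[F] C) (hθ : hh.IsGrunspan θ)
    (a b c d : C) (ra : CoalgebraRepr F a) :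
    (∑ i ∈ ra.index, hh.tau (ra.right i) (hh.χ (θ (ra.left i)) b c)
        = counit (R := F) a • hh.tau b c) ∧
    (∑ i ∈ ra.index, hh.tau (ra.right i) (θ (ra.left i))
        = counit (R := F) a • (LinearMap.id : C →ₗ[F] C)) ∧
    hh.tau c d ∘ₗ hh.tau a (θ b) = hh.tau (hh.χ c b a) d := by
  refine ⟨?_, ?_, ?_⟩
  · ext x
    simp only [LinearMap.sum_apply, HopfHeap.tau_apply, LinearMap.smul_apply, ← hh.assoc]
    exact hh.sum_chi_chi_grunspan hθ a ra x b c
  · ext x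
    simpa using hh.sum_chi_grunspan hθ a ra x
  · ext x
    exact hθ.chi_chi_eq x a b c d
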